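/- The rational function F(w¹,w²,w³) = w¹((w¹)²/12 + w²w³/4) + (w³)⁴/768 + (w²)³/(6w³) satisfies the WDVV associativity equations on the domain {w³ ≠ 0} ⊂ ℝ³ with constant metric η given by η₁₁ = 1/2, η₂₃ = η₃₂ = 1/4 and all other entries zero: for all α,β one has ∂₁∂_α∂_β F = η_{αβ}, the matrix η is invertible, and the structure constants c^γ_{αβ} = Σ_ε (η⁻¹)^{γε} ∂_ε∂_α∂_β F satisfy Σ_ε c^ε_{αβ} c^σ_{εγ} = Σ_ε c^ε_{αγ} c^σ_{εβ} for all α,β,γ,σ at every point with w³ ≠ 0. -/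

import Mathlib

/-- Partial derivative of `f : (Fin N → ℝ) → ℝ` in the `i`-th coordinate direction. -/
noncomputable def pd {N : ℕ} (i : Fin N) (f : (Fin N → ℝ) → ℝ) : (Fin N → ℝ) → ℝ :=
  fun x => fderiv ℝ f x (Pi.single i 1)

/-- The potential. -/
noncomputable def FF : (Fin 3 → ℝ) → ℝ :=
  fun w => w 0 * ((w 0) ^ 2 / 12 + w 1 * w 2 / 4) + (w 2) ^ 4 / 768 + (w 1) ^ 3 / (6 * w 2)

/-- The constant metric. -/
noncomputable def eta : Matrix (Fin 3) (Fin 3) ℝ :=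
  !![1/2, 0, 0; 0, 0, 1/4; 0, 1/4, 0]

/-- Third partial derivatives `c_(αβγ) = ∂_α ∂_β ∂_γ F`. -/
noncomputable def c3 (α β γ : Fin 3) (x : Fin 3 → ℝ) : ℝ :=
  pd α (pd β (pd γ FF)) x

/-- Structure constants `c^γ_(αβ) = Σ_ε (η⁻¹)^(γε) c_(εαβ)`. -/
noncomputable def cUp (γ α β : Fin 3) (x : Fin 3 → ℝ) : ℝ :=
  ∑ ε, eta⁻¹ γ ε * c3 ε α β x

/-! The third derivatives of `FF` on `{w 2 ≠ 0}` are computed symbolically as a symmetric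
trilinear form `FF'''`, whose contraction with `e₀` is the bilinear form of `eta`. The structure
constants define multiplication operators `M a = eta⁻¹ * (c3 · a ·)` (`mulMatrix`); since the
product is commutative, associativity `(e_a e_b) e_g = (e_a e_g) e_b` says `M g * M b = M b * M g`.
As `M 0 = 1`, everything reduces to `M 1 * M 2 = M 2 * M 1`, a rational identity in `w 1, w 2`. -/

open scoped Matrix

section PartialDerivative

variable {N : ℕ} {f g : (Fin N → ℝ) → ℝ} {x : Fin N → ℝ} (i : Fin N)

theorem pd_const (c : ℝ) : pd i (fun _ => c) x = 0 := by
  simp [pd]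

theorem pd_apply (j : Fin N) : pd i (fun y => y j) x = (Pi.single i 1 : Fin N → ℝ) j := by
  simp [pd, (hasFDerivAt_apply j x).fderiv]

theorem pd_add (hf : DifferentiableAt ℝ f x) (hg : DifferentiableAt ℝ g x) :
    pd i (fun y => f y + g y) x = pd i f x + pd i g x := by
  simp [pd, fderiv_fun_add hf hg]

theorem pd_sub (hf : DifferentiableAt ℝ f x) (hg : DifferentiableAt ℝ g x) :
    pd i (fun y => f y - g y) x = pd i f x - pd i g x := by
  simp [pd, fderiv_fun_sub hf hg]

theorem pd_mul (hf : DifferentiableAt ℝ f x) (hg : DifferentiableAt ℝ g x) :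
    pd i (fun y => f y * g y) x = pd i f x * g x + f x * pd i g x := by
  simp [pd, fderiv_fun_mul hf hg]
  ring

theorem pd_pow (hf : DifferentiableAt ℝ f x) (n : ℕ) :
    pd i (fun y => f y ^ n) x = n * f x ^ (n - 1) * pd i f x := by
  simp [pd, fderiv_fun_pow n hf]

theorem pd_inv (hg : DifferentiableAt ℝ g x) (hx : g x ≠ 0) :
    pd i (fun y => (g y)⁻¹) x = -pd i g x / g x ^ 2 := by
  have h : HasFDerivAt (fun y => (g y)⁻¹) _ x := (hasFDerivAt_inv hx).comp x hg.hasFDerivAt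
  simp [pd, h.fderiv]
  ring

theorem pd_div (hf : DifferentiableAt ℝ f x) (hg : DifferentiableAt ℝ g x) (hx : g x ≠ 0) :
    pd i (fun y => f y / g y) x = (pd i f x * g x - f x * pd i g x) / g x ^ 2 := by
  simp only [div_eq_mul_inv]
  rw [pd_mul (g := fun y => (g y)⁻¹) i hf (hg.inv hx), pd_inv i hg hx]
  field_simp
  ring

theorem pd_congr_of_eqOn {s : Set (Fin N → ℝ)} (hs : IsOpen s) (h : Set.EqOn f g s)
    (hx : x ∈ s) :
    pd i f x = pd i g x := by
  rw [pd, pd, (h.eventuallyEq_of_mem (hs.mem_nhds hx)).fderiv_eq]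

end PartialDerivative

noncomputable def FF' (u y : Fin 3 → ℝ) : ℝ :=
  y 0 ^ 2 * u 0 / 4 + (u 0 * y 1 * y 2 + y 0 * u 1 * y 2 + y 0 * y 1 * u 2) / 4
    + y 2 ^ 3 * u 2 / 192 + y 1 ^ 2 * u 1 / (2 * y 2) - y 1 ^ 3 * u 2 / (6 * y 2 ^ 2)

noncomputable def FF'' (u v y : Fin 3 → ℝ) : ℝ :=
  y 0 * u 0 * v 0 / 2
    + (u 0 * v 1 * y 2 + u 0 * y 1 * v 2 + v 0 * u 1 * y 2 + y 0 * u 1 * v 2 + v 0 * y 1 * u 2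
      + y 0 * v 1 * u 2) / 4
    + y 2 ^ 2 * u 2 * v 2 / 64 + y 1 * u 1 * v 1 / y 2
    - y 1 ^ 2 * (u 1 * v 2 + u 2 * v 1) / (2 * y 2 ^ 2)
    + y 1 ^ 3 * u 2 * v 2 / (3 * y 2 ^ 3)

noncomputable def FF''' (u v w y : Fin 3 → ℝ) : ℝ :=
  u 0 * v 0 * w 0 / 2
    + (u 0 * v 1 * w 2 + u 0 * v 2 * w 1 + u 1 * v 0 * w 2 + u 1 * v 2 * w 0 + u 2 * v 0 * w 1
      + u 2 * v 1 * w 0) / 4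
    + y 2 * u 2 * v 2 * w 2 / 32 + u 1 * v 1 * w 1 / y 2
    - y 1 * (u 1 * v 1 * w 2 + u 1 * v 2 * w 1 + u 2 * v 1 * w 1) / y 2 ^ 2
    + y 1 ^ 2 * (u 1 * v 2 * w 2 + u 2 * v 1 * w 2 + u 2 * v 2 * w 1) / y 2 ^ 3
    - y 1 ^ 3 * u 2 * v 2 * w 2 / y 2 ^ 4

theorem pd_FF (i : Fin 3) {y : Fin 3 → ℝ} (hy : y 2 ≠ 0) :
    pd i FF y = FF' (Pi.single i 1) y := by
  unfold FF
  simp (disch := first | fun_prop (disch := simp [hy]) | simp [hy]) only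
    [pd_add, pd_mul, pd_div, pd_pow, pd_apply, pd_const]
  unfold FF'
  field_simp
  ring

theorem pd_FF' (i : Fin 3) (u : Fin 3 → ℝ) {y : Fin 3 → ℝ} (hy : y 2 ≠ 0) :
    pd i (FF' u) y = FF'' u (Pi.single i 1) y := by
  unfold FF'
  simp (disch := first | fun_prop (disch := simp [hy]) | simp [hy]) only
    [pd_add, pd_sub, pd_mul, pd_div, pd_pow, pd_apply, pd_const]
  unfold FF''
  field_simp
  ring

theorem pd_FF'' (i : Fin 3) (u v : Fin 3 → ℝ) {y : Fin 3 → ℝ} (hy : y 2 ≠ 0) :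
    pd i (FF'' u v) y = FF''' u v (Pi.single i 1) y := by
  unfold FF''
  simp (disch := first | fun_prop (disch := simp [hy]) | simp [hy]) only
    [pd_add, pd_sub, pd_mul, pd_div, pd_pow, pd_apply, pd_const]
  unfold FF'''
  field_simp
  ring

theorem FF'''_swap₁₂ (u v w y : Fin 3 → ℝ) : FF''' u v w y = FF''' v u w y := by
  unfold FF'''
  ring

theorem FF'''_swap₂₃ (u v w y : Fin 3 → ℝ) : FF''' u v w y = FF''' u w v y := by
  unfold FF'''
  ring

theorem FF'''_single_zero (u v y : Fin 3 → ℝ) :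
    FF''' u v (Pi.single 0 1) y = u ⬝ᵥ (eta *ᵥ v) := by
  simp [FF''', eta, Matrix.mulVec, dotProduct, Fin.sum_univ_three]
  ring

theorem c3_eq {x : Fin 3 → ℝ} (hx : x 2 ≠ 0) (α β γ : Fin 3) :
    c3 α β γ x = FF''' (Pi.single γ 1) (Pi.single β 1) (Pi.single α 1) x := by
  have hU : IsOpen {y : Fin 3 → ℝ | y 2 ≠ 0} :=
    isOpen_ne_fun (continuous_apply 2) continuous_const
  have h2 : Set.EqOn (pd β (pd γ FF)) (FF'' (Pi.single γ 1) (Pi.single β 1)) {y | y 2 ≠ 0} :=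
    fun y hy => (pd_congr_of_eqOn β hU (fun z hz => pd_FF γ hz) hy).trans (pd_FF' β _ hy)
  rw [c3, pd_congr_of_eqOn α hU h2 hx, pd_FF'' α _ _ hx]

theorem c3_zero {x : Fin 3 → ℝ} (hx : x 2 ≠ 0) (α β : Fin 3) :
    c3 0 α β x = eta α β := by
  rw [c3_eq hx, FF'''_swap₁₂, FF'''_single_zero]
  simp

theorem eta_det : eta.det = -1 / 32 := by
  simp [eta, Matrix.det_fin_three]
  norm_num

theorem eta_inv : eta⁻¹ = !![2, 0, 0; 0, 0, 4; 0, 4, 0] := by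
  refine Matrix.inv_eq_right_inv ?_
  ext i j
  fin_cases i <;> fin_cases j <;> simp [eta, Matrix.mul_apply, Fin.sum_univ_three]

theorem structureConstants_assoc_of_commute {ι R : Type*} [Fintype ι] [CommRing R]
    (c : ι → ι → ι → R) (hc : ∀ σ a b, c σ a b = c σ b a)
    (hcomm : ∀ a b, Commute (Matrix.of fun σ ε => c σ a ε) (Matrix.of fun σ ε => c σ b ε))
    (a b g s : ι) : ∑ e, c e a b * c s e g = ∑ e, c e a g * c s e b := by
  have h := congr_fun (congr_fun (hcomm g b).eq s) a
  simp only [Matrix.mul_apply, Matrix.of_apply] at h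
  calc ∑ e, c e a b * c s e g = ∑ e, c s g e * c e b a :=
        Finset.sum_congr rfl fun e _ => by rw [hc e a, hc s e, mul_comm]
    _ = ∑ e, c s b e * c e g a := h
    _ = ∑ e, c e a g * c s e b :=
        Finset.sum_congr rfl fun e _ => by rw [hc e g, hc s e, mul_comm]

theorem cUp_comm {x : Fin 3 → ℝ} (hx : x 2 ≠ 0) (σ a b : Fin 3) :
    cUp σ a b x = cUp σ b a x := by
  simp only [cUp, c3_eq hx, FF'''_swap₁₂ (Pi.single b 1)]

noncomputable def mulMatrix (x : Fin 3 → ℝ) (a : Fin 3) : Matrix (Fin 3) (Fin 3) ℝ :=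
  Matrix.of fun σ ε => cUp σ a ε x

theorem mulMatrix_zero {x : Fin 3 → ℝ} (hx : x 2 ≠ 0) : mulMatrix x 0 = 1 := by
  have h : ∀ ε b, c3 ε 0 b x = eta ε b := fun ε b => by
    rw [← c3_zero hx, c3_eq hx, c3_eq hx, FF'''_swap₂₃]
  ext σ b
  simp only [mulMatrix, Matrix.of_apply, cUp, h, ← Matrix.mul_apply]
  rw [Matrix.nonsing_inv_mul eta (by simp [eta_det])]

theorem mulMatrix_one_commute_two {x : Fin 3 → ℝ} (hx : x 2 ≠ 0) :
    Commute (mulMatrix x 1) (mulMatrix x 2) := by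
  ext σ b
  fin_cases σ <;> fin_cases b <;>
    simp [mulMatrix, Matrix.mul_apply, Fin.sum_univ_three, cUp, eta_inv, c3_eq hx, FF''']
  all_goals field_simp
  all_goals ring

theorem mulMatrix_commute {x : Fin 3 → ℝ} (hx : x 2 ≠ 0) (a b : Fin 3) :
    Commute (mulMatrix x a) (mulMatrix x b) := by
  have h12 := mulMatrix_one_commute_two hx
  fin_cases a <;> fin_cases b <;>
    simp only [Fin.zero_eta, Fin.mk_one, Fin.reduceFinMk, mulMatrix_zero hx, Commute.one_left,
      Commute.one_right, Commute.refl, h12, h12.symm]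

theorem stmt_3 :
    (∀ (α β : Fin 3) (x : Fin 3 → ℝ), (_ : x 2 ≠ 0) → c3 0 α β x = eta α β) ∧
    IsUnit eta.det ∧
    (∀ (α β γ σ : Fin 3) (x : Fin 3 → ℝ), (_ : x 2 ≠ 0) → 
      ∑ ε, cUp ε α β x * cUp σ ε γ x = ∑ ε, cUp ε α γ x * cUp σ ε β x) := by
  refine ⟨fun α β x hx => c3_zero hx α β, by norm_num [eta_det], fun α β γ σ x hx => ?_⟩
  exact structureConstants_assoc_of_commute (fun σ a b => cUp σ a b x) (cUp_comm hx)
    (mulMatrix_commute hx) α β γ σ
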